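/- arXiv:2506.02244 — 3 statements merged into one kernel-verified Lean document; each statement's English description precedes it below -/
import Mathlib

section
/- Let I be a finite nonempty index set with energies E_i ≥ 0 (Σ_i E_i > 0), gates g_i with 0 < g_min ≤ g_i ≤ g_max, weights w_i = g_i·E_i, residuals e_i ∈ ℝ, tolerance Δ > 0, normalized weighted residual L = (Σ_i w_i e_i²)/(Σ_i w_i), and tilted-line energy ratio C_rot = (Σ_{i : |e_i| ≤ Δ} E_i)/(Σ_i E_i). Let p = (p_1, …, p_{N_r}) be a probability vector over N_r ≥ 2 rings with some p_{k₀} ≥ 1 − ε, 0 ≤ ε ≤ (N_r−1)/N_r, and set C_ring = 1 − H(p)/log N_r where H(p) = −Σ_k p_k log p_k. Then the rotation loss L_rot := 1 − (C_ring + C_rot)/2 satisfies L_rot ≤ (g_max/(2·g_min)) · Δ^{−2} · L + (h(ε) + ε·log(N_r−1))/(2·log N_r), where h(ε) = −ε log ε − (1−ε) log(1−ε). -/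
/-!
The ring term is Fano's inequality: splitting off the dominant ring and applying Jensen to the
concave `negMulLog` on the remaining `N_r - 1` rings bounds `H(p)` by the `N_r`-ary entropy of the
tail mass `1 - p_{k₀} ≤ ε`, which is monotone on `[0, 1 - 1/N_r]`. The rotation term is Chebyshev's
inequality: energy farther than `Δ` from the line costs at least `Δ²` per unit in the weighted
residual, and passing between the weights `w = g·E` and `E` loses at most `g_max / g_min`.
-/

open Real Finset

theorem qaryEntropy_eq_negMulLog_add_negMulLog_one_sub_add (q : ℕ) (p : ℝ) :
    qaryEntropy q p = negMulLog p + negMulLog (1 - p) + p * log (q - 1) := by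
  simp only [qaryEntropy, binEntropy_eq_negMulLog_add_negMulLog_one_sub]
  push_cast
  ring

theorem sum_negMulLog_le_negMulLog_sum_add_mul_log_card {ι : Type*} (s : Finset ι)
    {p : ι → ℝ} (hp : ∀ i ∈ s, 0 ≤ p i) :
    ∑ i ∈ s, negMulLog (p i) ≤ negMulLog (∑ i ∈ s, p i) + (∑ i ∈ s, p i) * log #s := by
  rcases s.eq_empty_or_nonempty with rfl | hs
  · simp
  have hcard : (0 : ℝ) < #s := by exact_mod_cast hs.card_pos
  have jensen := concaveOn_negMulLog.le_map_sum (t := s) (w := fun _ => (#s : ℝ)⁻¹) (p := p)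
    (fun _ _ => by positivity) (by simp [hcard.ne']) hp
  simp only [smul_eq_mul, ← mul_sum, negMulLog_mul] at jensen
  have hinv : negMulLog (#s : ℝ)⁻¹ = (#s : ℝ)⁻¹ * log #s := by simp [negMulLog, log_inv]
  rw [hinv] at jensen
  have := mul_le_mul_of_nonneg_left jensen hcard.le
  field_simp at this
  linarith

theorem sum_negMulLog_le_qaryEntropy {ι : Type*} [Fintype ι] (hcard : 2 ≤ Fintype.card ι)
    {p : ι → ℝ} (hp : ∀ k, 0 ≤ p k) (hsum : ∑ k, p k = 1) {ε : ℝ}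
    (hε : ε ≤ 1 - 1 / Fintype.card ι) (k₀ : ι) (hk₀ : 1 - ε ≤ p k₀) :
    ∑ k, negMulLog (p k) ≤ qaryEntropy (Fintype.card ι) ε := by
  classical
  set q := 1 - p k₀ with hq
  have htail : ∑ k ∈ univ.erase k₀, p k = q := by
    rw [hq, ← hsum, ← add_sum_erase univ p (mem_univ k₀)]; ring
  have htail_card : ((#(univ.erase k₀) : ℕ) : ℝ) = Fintype.card ι - 1 := by
    rw [card_erase_of_mem (mem_univ k₀), card_univ, Nat.cast_sub (by omega), Nat.cast_one]
  have hq0 : 0 ≤ q := htail ▸ sum_nonneg fun k _ => hp k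
  have hjensen := sum_negMulLog_le_negMulLog_sum_add_mul_log_card (univ.erase k₀)
    fun k _ => hp k
  rw [htail, htail_card] at hjensen
  calc ∑ k, negMulLog (p k)
      = negMulLog (1 - q) + ∑ k ∈ univ.erase k₀, negMulLog (p k) := by
        rw [hq, sub_sub_cancel, add_sum_erase univ (fun k => negMulLog (p k)) (mem_univ k₀)]
    _ ≤ qaryEntropy (Fintype.card ι) q := by
        rw [qaryEntropy_eq_negMulLog_add_negMulLog_one_sub_add]; linarith
    _ ≤ qaryEntropy (Fintype.card ι) ε :=
        (qaryEntropy_strictMonoOn hcard).monotoneOn ⟨hq0, by linarith⟩ ⟨by linarith, hε⟩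
          (by linarith)

theorem sq_mul_sum_filter_lt_abs_le_sum_mul_sq {ι : Type*} (s : Finset ι) {u e : ι → ℝ}
    {Δ : ℝ} (hu : ∀ i ∈ s, 0 ≤ u i) (hΔ : 0 ≤ Δ) :
    Δ ^ 2 * ∑ i ∈ s with Δ < |e i|, u i ≤ ∑ i ∈ s, u i * e i ^ 2 := by
  rw [mul_sum]
  calc ∑ i ∈ s with Δ < |e i|, Δ ^ 2 * u i
      ≤ ∑ i ∈ s with Δ < |e i|, u i * e i ^ 2 := by
        refine sum_le_sum fun i hi => ?_
        obtain ⟨his, hfar⟩ := mem_filter.1 hi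
        have : Δ ^ 2 ≤ e i ^ 2 := by
          rw [← sq_abs (e i)]; exact pow_le_pow_left₀ hΔ hfar.le 2
        nlinarith [hu i his]
    _ ≤ ∑ i ∈ s, u i * e i ^ 2 :=
        sum_le_sum_of_subset_of_nonneg (filter_subset _ _)
          fun i hi _ => mul_nonneg (hu i hi) (sq_nonneg _)

theorem sum_div_sum_le_div_mul_weighted {ι : Type*} {s t : Finset ι} (hts : t ⊆ s)
    {E g : ι → ℝ} {gmin gmax : ℝ} (hE : ∀ i ∈ s, 0 ≤ E i) (hEpos : 0 < ∑ i ∈ s, E i)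
    (hgmin : 0 < gmin) (hglb : ∀ i ∈ s, gmin ≤ g i) (hgub : ∀ i ∈ s, g i ≤ gmax) :
    (∑ i ∈ t, E i) / ∑ i ∈ s, E i
      ≤ gmax / gmin * ((∑ i ∈ t, g i * E i) / ∑ i ∈ s, g i * E i) := by
  have hlow : ∀ u ⊆ s, gmin * ∑ i ∈ u, E i ≤ ∑ i ∈ u, g i * E i := fun u hu => by
    rw [mul_sum]
    exact sum_le_sum fun i hi => mul_le_mul_of_nonneg_right (hglb i (hu hi)) (hE i (hu hi))
  have hup : ∑ i ∈ s, g i * E i ≤ gmax * ∑ i ∈ s, E i := by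
    rw [mul_sum]
    exact sum_le_sum fun i hi => mul_le_mul_of_nonneg_right (hgub i hi) (hE i hi)
  have hW : 0 < ∑ i ∈ s, g i * E i := (mul_pos hgmin hEpos).trans_le (hlow s subset_rfl)
  have ht0 : 0 ≤ ∑ i ∈ t, E i := sum_nonneg fun i hi => hE i (hts hi)
  rw [div_mul_div_comm, div_le_div_iff₀ hEpos (mul_pos hgmin hW)]
  calc (∑ i ∈ t, E i) * (gmin * ∑ i ∈ s, g i * E i)
      ≤ (gmin * ∑ i ∈ t, E i) * (gmax * ∑ i ∈ s, E i) := by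
        nlinarith [mul_le_mul_of_nonneg_left hup ht0]
    _ ≤ (∑ i ∈ t, g i * E i) * (gmax * ∑ i ∈ s, E i) :=
        mul_le_mul_of_nonneg_right (hlow t hts) (hW.le.trans hup)
    _ = gmax * (∑ i ∈ t, g i * E i) * ∑ i ∈ s, E i := by ring

theorem one_sub_sum_filter_abs_le_div_sum_le {ι : Type*} (s : Finset ι) {E g e : ι → ℝ}
    {gmin gmax Δ : ℝ} (hE : ∀ i ∈ s, 0 ≤ E i) (hEpos : 0 < ∑ i ∈ s, E i) (hgmin : 0 < gmin)
    (hglb : ∀ i ∈ s, gmin ≤ g i) (hgub : ∀ i ∈ s, g i ≤ gmax) (hΔ : 0 < Δ) :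
    1 - (∑ i ∈ s with |e i| ≤ Δ, E i) / ∑ i ∈ s, E i
      ≤ gmax / gmin * ((Δ ^ 2)⁻¹
          * ((∑ i ∈ s, g i * E i * e i ^ 2) / ∑ i ∈ s, g i * E i)) := by
  have hsplit := sum_filter_not_add_sum_filter s (fun i => |e i| ≤ Δ) E
  simp only [not_le] at hsplit
  rw [one_sub_div hEpos.ne', ← eq_sub_of_add_eq hsplit]
  have hw : ∀ i ∈ s, 0 ≤ g i * E i := fun i hi => mul_nonneg (hgmin.le.trans (hglb i hi)) (hE i hi)
  obtain ⟨i, hi⟩ := nonempty_of_sum_ne_zero hEpos.ne'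
  refine (sum_div_sum_le_div_mul_weighted (filter_subset _ s) hE hEpos hgmin hglb hgub).trans
    (mul_le_mul_of_nonneg_left ?_ (div_nonneg (hgmin.le.trans ((hglb i hi).trans (hgub i hi)))
      hgmin.le))
  rw [← mul_div_assoc]
  refine div_le_div_of_nonneg_right ?_ (sum_nonneg hw)
  rw [le_inv_mul_iff₀ (by positivity)]
  exact sq_mul_sum_filter_lt_abs_le_sum_mul_sq s hw hΔ.le

theorem rotation_surrogate_le_unified_residual_general
    {I : Type*} [Fintype I]
    (E g e : I → ℝ) (gmin gmax Δ : ℝ)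
    (hE : ∀ i, 0 ≤ E i) (hEpos : 0 < ∑ i, E i)
    (hgmin : 0 < gmin)
    (hglb : ∀ i, gmin ≤ g i) (hgub : ∀ i, g i ≤ gmax)
    (w : I → ℝ) (hw : ∀ i, w i = g i * E i)
    (hΔ : 0 < Δ)
    (L : ℝ) (hL : L = (∑ i, w i * (e i) ^ 2) / (∑ i, w i))
    (Crot : ℝ)
    (hCrot : Crot = (∑ i ∈ univ.filter (fun i => |e i| ≤ Δ), E i) / (∑ i, E i))
    (Nr : ℕ) (hNr : 2 ≤ Nr)
    (p : Fin Nr → ℝ) (hp : ∀ k, 0 ≤ p k) (hsum : ∑ k, p k = 1)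
    (ε : ℝ) (hεub : ε ≤ ((Nr : ℝ) - 1) / Nr)
    (k₀ : Fin Nr) (hk₀ : 1 - ε ≤ p k₀)
    (Cring : ℝ) (hCring : Cring = 1 - (∑ k, negMulLog (p k)) / Real.log Nr) :
    1 - (Cring + Crot) / 2
      ≤ (gmax / (2 * gmin)) * (Δ ^ 2)⁻¹ * L
        + ((negMulLog ε + negMulLog (1 - ε)) + ε * Real.log ((Nr : ℝ) - 1))
          / (2 * Real.log Nr) := by
  obtain rfl : w = fun i => g i * E i := funext hw
  have hrot : 1 - Crot ≤ gmax / gmin * ((Δ ^ 2)⁻¹ * L) := by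
    rw [hCrot, hL]
    exact one_sub_sum_filter_abs_le_div_sum_le univ (fun i _ => hE i) hEpos hgmin
      (fun i _ => hglb i) (fun i _ => hgub i) hΔ
  have hring : 1 - Cring ≤ qaryEntropy Nr ε / log Nr := by
    have hlog : 0 < log Nr := log_pos (by exact_mod_cast hNr)
    rw [hCring, sub_sub_cancel]
    gcongr
    simpa using sum_negMulLog_le_qaryEntropy (by simpa using hNr) hp hsum
      (by rwa [Fintype.card_fin, one_sub_div (by positivity)]) k₀ hk₀
  rw [qaryEntropy_eq_negMulLog_add_negMulLog_one_sub_add] at hring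
  calc 1 - (Cring + Crot) / 2 = ((1 - Crot) + (1 - Cring)) / 2 := by ring
    _ ≤ (gmax / gmin * ((Δ ^ 2)⁻¹ * L)
          + (negMulLog ε + negMulLog (1 - ε) + ε * log (Nr - 1)) / log Nr) / 2 := by gcongr
    _ = _ := by ring

/-- Rotation surrogate upper-bounds the unified rotational-slice residual
(finite-data, windowing- and interpolation-free version). -/
theorem rotation_surrogate_le_unified_residual
    {I : Type*} [Fintype I] [Nonempty I]
    (E g e : I → ℝ) (gmin gmax Δ : ℝ)
    (hE : ∀ i, 0 ≤ E i) (hEpos : 0 < ∑ i, E i)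
    (hgmin : 0 < gmin)
    (hglb : ∀ i, gmin ≤ g i) (hgub : ∀ i, g i ≤ gmax)
    (w : I → ℝ) (hw : ∀ i, w i = g i * E i)
    (hΔ : 0 < Δ)
    (L : ℝ) (hL : L = (∑ i, w i * (e i) ^ 2) / (∑ i, w i))
    (Crot : ℝ)
    (hCrot : Crot = (∑ i ∈ univ.filter (fun i => |e i| ≤ Δ), E i) / (∑ i, E i))
    (Nr : ℕ) (hNr : 2 ≤ Nr)
    (p : Fin Nr → ℝ) (hp : ∀ k, 0 ≤ p k) (hsum : ∑ k, p k = 1)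
    (ε : ℝ) (hε0 : 0 ≤ ε) (hεub : ε ≤ ((Nr : ℝ) - 1) / Nr)
    (k₀ : Fin Nr) (hk₀ : 1 - ε ≤ p k₀)
    (Cring : ℝ) (hCring : Cring = 1 - (∑ k, negMulLog (p k)) / Real.log Nr) :
    1 - (Cring + Crot) / 2
      ≤ (gmax / (2 * gmin)) * (Δ ^ 2)⁻¹ * L
        + ((negMulLog ε + negMulLog (1 - ε)) + ε * Real.log ((Nr : ℝ) - 1))
          / (2 * Real.log Nr) :=
  rotation_surrogate_le_unified_residual_general E g e gmin gmax Δ hE hEpos hgmin hglb hgub w hw hΔ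
    L hL Crot hCrot Nr hNr p hp hsum ε hεub k₀ hk₀ Cring hCring
end

section
/- Let I be a finite nonempty index set with energies E_i ≥ 0 (Σ_i E_i > 0), gates g_i with 0 < g_min ≤ g_i ≤ g_max, weights w_i = g_i·E_i, residuals e_i ∈ ℝ, and tolerance Δ > 0. Define the scaling tilted-line ratio C_scale = (Σ_{i : |e_i| ≤ Δ} E_i)/(Σ_i E_i) and the normalized weighted residual L_uni^(scale) = (Σ_i w_i e_i²)/(Σ_i w_i). Then 1 − C_scale ≤ (g_max/g_min) · Δ^{−2} · L_uni^(scale). -/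
open Finset

/-- Scaling tilted-line band-capture: the out-of-band energy fraction `1 - C_scale`
is bounded by the gate ratio times `Δ⁻²` times the normalized weighted residual. -/
theorem scaling_band_capture
    {I : Type*} [Fintype I] [Nonempty I]
    (E g e : I → ℝ) (gmin gmax Δ : ℝ)
    (hE : ∀ i, 0 ≤ E i) (hEpos : 0 < ∑ i, E i)
    (hgmin : 0 < gmin)
    (hglb : ∀ i, gmin ≤ g i) (hgub : ∀ i, g i ≤ gmax)
    (w : I → ℝ) (hw : ∀ i, w i = g i * E i)
    (hΔ : 0 < Δ)
    (Cscale : ℝ)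
    (hCscale : Cscale = (∑ i ∈ univ.filter (fun i => |e i| ≤ Δ), E i) / (∑ i, E i))
    (Luni : ℝ) (hLuni : Luni = (∑ i, w i * (e i) ^ 2) / (∑ i, w i)) :
    1 - Cscale ≤ (gmax / gmin) * (Δ ^ 2)⁻¹ * Luni := by
  classical
  set T := ∑ i, E i with hT
  set Q := ∑ i, w i * (e i) ^ 2 with hQdef
  set W := ∑ i, w i with hWdef
  set O := ∑ i ∈ univ.filter (fun i => ¬ |e i| ≤ Δ), E i with hOdef
  have hgmax : 0 < gmax := lt_of_lt_of_le hgmin (le_trans (hglb (Classical.arbitrary I)) (hgub (Classical.arbitrary I)))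
  have hwnn : ∀ i, 0 ≤ w i := fun i => by
    rw [hw i]; exact mul_nonneg (le_trans hgmin.le (hglb i)) (hE i)
  have hQnn : 0 ≤ Q :=
    Finset.sum_nonneg fun i _ => mul_nonneg (hwnn i) (sq_nonneg _)
  have hOnn : 0 ≤ O := Finset.sum_nonneg fun i _ => hE i
  have hWge : gmin * T ≤ W := by
    rw [hWdef, hT, Finset.mul_sum]
    exact Finset.sum_le_sum fun i _ => by
      rw [hw i]; exact mul_le_mul_of_nonneg_right (hglb i) (hE i)
  have hWle : W ≤ gmax * T := by
    rw [hWdef, hT, Finset.mul_sum]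
    exact Finset.sum_le_sum fun i _ => by
      rw [hw i]; exact mul_le_mul_of_nonneg_right (hgub i) (hE i)
  have hWpos : 0 < W := lt_of_lt_of_le (mul_pos hgmin hEpos) hWge
  -- key: gmin * Δ² * O ≤ Q
  have hkey : gmin * Δ ^ 2 * O ≤ Q := by
    have h1 : gmin * Δ ^ 2 * O ≤ ∑ i ∈ univ.filter (fun i => ¬ |e i| ≤ Δ), w i * (e i) ^ 2 := by
      rw [hOdef, Finset.mul_sum]
      refine Finset.sum_le_sum fun i hi => ?_
      have hib : Δ ≤ |e i| := le_of_lt (lt_of_not_ge (Finset.mem_filter.mp hi).2)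
      have h2 : Δ ^ 2 ≤ (e i) ^ 2 := by
        rw [← sq_abs (e i)]
        exact pow_le_pow_left₀ hΔ.le hib 2
      calc gmin * Δ ^ 2 * E i = (gmin * E i) * Δ ^ 2 := by ring
        _ ≤ (g i * E i) * (e i) ^ 2 := by
            exact mul_le_mul (mul_le_mul_of_nonneg_right (hglb i) (hE i)) h2
              (sq_nonneg _) (mul_nonneg (le_trans hgmin.le (hglb i)) (hE i))
        _ = w i * (e i) ^ 2 := by rw [hw i]
    refine le_trans h1 ?_
    exact Finset.sum_le_sum_of_subset_of_nonneg (Finset.filter_subset _ _)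
      (fun i _ _ => mul_nonneg (hwnn i) (sq_nonneg _))
  -- 1 - Cscale = O / T
  have hsplit : (∑ i ∈ univ.filter (fun i => |e i| ≤ Δ), E i) + O = T := by
    rw [hOdef, hT]
    exact Finset.sum_filter_add_sum_filter_not _ _ _
  have h1C : 1 - Cscale = O / T := by
    rw [hCscale]
    field_simp
    linarith [hsplit]
  rw [h1C, hLuni]
  rw [div_le_iff₀ hEpos]
  have hRHS : gmax / gmin * (Δ ^ 2)⁻¹ * (Q / W) * T = gmax * Q * T / (gmin * Δ ^ 2 * W) := by
    field_simp
  rw [hRHS, le_div_iff₀ (by positivity)]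
  have hc1 : O * (gmin * Δ ^ 2 * W) = (gmin * Δ ^ 2 * O) * W := by ring
  calc O * (gmin * Δ ^ 2 * W) = (gmin * Δ ^ 2 * O) * W := by ring
    _ ≤ Q * W := mul_le_mul_of_nonneg_right hkey hWpos.le
    _ ≤ Q * (gmax * T) := mul_le_mul_of_nonneg_left hWle hQnn
    _ = gmax * Q * T := by ring
end

section
/- Let I be a finite nonempty index set with energies E_i ≥ 0 (Σ_i E_i > 0), gates g_i with 0 < g_min ≤ g_i ≤ g_max, weights w_i = g_i·E_i, residuals e_i ∈ ℝ, and tolerance Δ > 0; let C_scale = (Σ_{i : |e_i| ≤ Δ} E_i)/(Σ_i E_i) and L_uni^(scale) = (Σ_i w_i e_i²)/(Σ_i w_i). Suppose real numbers C_flow and S_trend and δ_flow ≥ 0 satisfy C_flow + S_trend ≥ 1 + C_scale − δ_flow. Then the scaling loss L_scale := 1 − (C_flow + S_trend)/2 satisfies L_scale ≤ (g_max/(2·g_min)) · Δ^{−2} · L_uni^(scale) + δ_flow/2. -/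
open Finset

/-- Scaling surrogate upper-bounds the unified scaling-slice residual (discrete version,
zero window/interpolation terms): if the flow and trend statistics jointly capture the
band concentration up to slack `δ_flow`, then the scaling loss is bounded by
`(g_max/(2 g_min)) Δ⁻² L_uni^(scale) + δ_flow/2`. -/
theorem scaling_surrogate_le_unified_residual
    {I : Type*} [Fintype I] [Nonempty I]
    (E g e : I → ℝ) (gmin gmax Δ : ℝ)
    (hE : ∀ i, 0 ≤ E i) (hEpos : 0 < ∑ i, E i)
    (hgmin : 0 < gmin)
    (hglb : ∀ i, gmin ≤ g i) (hgub : ∀ i, g i ≤ gmax)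
    (w : I → ℝ) (hw : ∀ i, w i = g i * E i)
    (hΔ : 0 < Δ)
    (Cscale : ℝ)
    (hCscale : Cscale = (∑ i ∈ univ.filter (fun i => |e i| ≤ Δ), E i) / (∑ i, E i))
    (Luni : ℝ) (hLuni : Luni = (∑ i, w i * (e i) ^ 2) / (∑ i, w i))
    (Cflow Strend δflow : ℝ) (hδ : 0 ≤ δflow)
    (hjoint : 1 + Cscale - δflow ≤ Cflow + Strend) :
    1 - (Cflow + Strend) / 2
      ≤ (gmax / (2 * gmin)) * (Δ ^ 2)⁻¹ * Luni + δflow / 2 := by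
  set S := ∑ i, E i with hSdef
  set W := ∑ i, w i with hWdef
  set Q := ∑ i, w i * (e i) ^ 2 with hQdef
  set Sin := ∑ i ∈ univ.filter (fun i => |e i| ≤ Δ), E i with hSindef
  set Sout := ∑ i ∈ univ.filter (fun i => ¬ |e i| ≤ Δ), E i with hSoutdef
  have hsplit : Sin + Sout = S := by
    rw [hSindef, hSoutdef, hSdef]
    exact Finset.sum_filter_add_sum_filter_not _ _ _
  have hWlb : gmin * S ≤ W := by
    rw [hWdef, hSdef, Finset.mul_sum]
    exact Finset.sum_le_sum fun i _ => by
      rw [hw i]; exact mul_le_mul_of_nonneg_right (hglb i) (hE i)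
  have hWub : W ≤ gmax * S := by
    rw [hWdef, hSdef, Finset.mul_sum]
    exact Finset.sum_le_sum fun i _ => by
      rw [hw i]; exact mul_le_mul_of_nonneg_right (hgub i) (hE i)
  have hWpos : 0 < W := lt_of_lt_of_le (by positivity) hWlb
  have hQ : 0 ≤ Q := by
    apply Finset.sum_nonneg
    intro i _
    have : 0 ≤ w i := by rw [hw i]; exact mul_nonneg (le_of_lt (lt_of_lt_of_le hgmin (hglb i))) (hE i)
    positivity
  have hkey : gmin * Δ ^ 2 * Sout ≤ Q := by
    rw [hSoutdef, Finset.mul_sum, hQdef]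
    apply le_trans (Finset.sum_le_sum (g := fun i => w i * (e i) ^ 2) ?_)
    · exact Finset.sum_le_sum_of_subset_of_nonneg (Finset.filter_subset _ _)
        (fun i _ _ => by
          have : 0 ≤ w i := by rw [hw i]; exact mul_nonneg (le_of_lt (lt_of_lt_of_le hgmin (hglb i))) (hE i)
          positivity)
    · intro i hi
      simp only [Finset.mem_filter] at hi
      show gmin * Δ ^ 2 * E i ≤ w i * e i ^ 2
      have habs : Δ ≤ |e i| := le_of_not_ge hi.2
      have hΔ2 : Δ ^ 2 ≤ (e i) ^ 2 := by
        have := pow_le_pow_left₀ hΔ.le habs 2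
        rwa [sq_abs] at this
      rw [hw i]
      nlinarith [hE i, hglb i, hgmin, mul_le_mul_of_nonneg_right hΔ2 (hE i),
        mul_le_mul_of_nonneg_right (hglb i) (mul_nonneg (sq_nonneg (e i)) (hE i))]
  have h1C : 1 - Cscale = Sout / S := by
    rw [hCscale]
    field_simp
    linarith
  have hfrac : Sout / S ≤ gmax / gmin * (Δ ^ 2)⁻¹ * (Q / W) := by
    have heq : gmax / gmin * (Δ ^ 2)⁻¹ * (Q / W) = (gmax * Q) / (gmin * (Δ ^ 2 * W)) := by
      field_simp [hgmin.ne', hWpos.ne', pow_ne_zero 2 hΔ.ne']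
    rw [heq, div_le_div_iff₀ hEpos (by positivity)]
    nlinarith [mul_le_mul_of_nonneg_right hkey hWpos.le,
      mul_le_mul_of_nonneg_left hWub hQ, hEpos, sq_nonneg Δ]
  have heq2 : (gmax / (2 * gmin)) * (Δ ^ 2)⁻¹ * Luni
      = (gmax / gmin * (Δ ^ 2)⁻¹ * (Q / W)) / 2 := by
    rw [hLuni]; ring
  rw [heq2]
  have := hfrac
  rw [← h1C] at this
  linarith
end
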